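/- With the same definitions, the identity f^{1,i}(p^{(j-i)/2 + k} z) · f^{1,j}(z) = f^{1,i-k}(p^{(j-i+k)/2} z) · f^{1,j+k}(p^{k/2} z) holds as formal power series in z, for all integers i, j, k with 1 ≤ i, 1 ≤ j, 1 ≤ i-k, and j+k ≤ N-1 (and i, j, i-k, j+k all between 1 and N-1). -/

import Mathlib

open PowerSeries

/-- Exponential of a formal power series (meaningful when the constant term is zero). -/
noncomputable def pexp {K : Type*} [Field K] (S : PowerSeries K) : PowerSeries K :=
  PowerSeries.mk fun n => ∑ k ∈ Finset.range (n + 1),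
    PowerSeries.coeff n (S ^ k) / (Nat.factorial k : K)

open Finset

private lemma coeff_pow_eq_zero' {K : Type*} [Field K] {S : PowerSeries K}
    (hS : constantCoeff S = 0) {n k : ℕ} (h : n < k) : coeff n (S ^ k) = 0 := by
  have hd : (X : PowerSeries K) ^ k ∣ S ^ k :=
    pow_dvd_pow_of_dvd (PowerSeries.X_dvd_iff.mpr hS) k
  exact (PowerSeries.X_pow_dvd_iff.mp hd) n h

private lemma coeff_pexp {K : Type*} [Field K] {S : PowerSeries K} (hS : constantCoeff S = 0)
    {n m : ℕ} (hm : m ≤ n) :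
    coeff m (pexp S) = ∑ a ∈ range (n+1), coeff m (S ^ a) / (Nat.factorial a : K) := by
  rw [pexp, coeff_mk]
  apply Finset.sum_subset (Finset.range_subset_range.mpr (by omega))
  intro a _ hna
  simp only [mem_range, not_lt] at hna
  rw [coeff_pow_eq_zero' hS (by omega), zero_div]

private lemma pexp_mul {K : Type*} [Field K] [CharZero K] {S T : PowerSeries K}
    (hS : constantCoeff S = 0) (hT : constantCoeff T = 0) :
    pexp S * pexp T = pexp (S + T) := by
  have hST : constantCoeff (S * T) = 0 := by simp [map_mul, hS, hT]
  ext n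
  have hFzero : ∀ a b : ℕ, n < a + b → coeff n (S ^ a * T ^ b) = 0 := by
    intro a b hab
    have hd : (X : PowerSeries K) ^ (a + b) ∣ S ^ a * T ^ b := by
      rw [pow_add]
      exact mul_dvd_mul (pow_dvd_pow_of_dvd (PowerSeries.X_dvd_iff.mpr hS) a)
        (pow_dvd_pow_of_dvd (PowerSeries.X_dvd_iff.mpr hT) b)
    exact (PowerSeries.X_pow_dvd_iff.mp hd) n hab
  -- LHS
  rw [PowerSeries.coeff_mul]
  have hL : ∑ p ∈ Finset.HasAntidiagonal.antidiagonal n, coeff p.1 (pexp S) * coeff p.2 (pexp T)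
      = ∑ a ∈ range (n+1), ∑ b ∈ range (n+1),
          coeff n (S ^ a * T ^ b) / ((Nat.factorial a : K) * (Nat.factorial b : K)) := by
    rw [Finset.sum_congr rfl (fun p hp => by
      rw [coeff_pexp hS (Finset.HasAntidiagonal.antidiagonal.fst_le hp),
        coeff_pexp hT (Finset.HasAntidiagonal.antidiagonal.snd_le hp), Finset.sum_mul_sum])]
    rw [Finset.sum_comm]
    refine Finset.sum_congr rfl (fun a _ => ?_)
    rw [Finset.sum_comm]
    refine Finset.sum_congr rfl (fun b _ => ?_)
    rw [PowerSeries.coeff_mul, Finset.sum_div]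
    exact Finset.sum_congr rfl (fun p _ => by rw [div_mul_div_comm])
  rw [hL]
  -- RHS
  rw [pexp, coeff_mk]
  have hR : ∀ c : ℕ, coeff n ((S + T) ^ c) / (Nat.factorial c : K)
      = ∑ a ∈ range (c+1), coeff n (S ^ a * T ^ (c - a)) /
          ((Nat.factorial a : K) * (Nat.factorial (c-a) : K)) := by
    intro c
    rw [add_pow, map_sum, Finset.sum_div]
    refine Finset.sum_congr rfl (fun a ha => ?_)
    simp only [mem_range] at ha
    have h1 : (coeff n) (S ^ a * T ^ (c - a) * (c.choose a : PowerSeries K))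
        = coeff n (S ^ a * T ^ (c - a)) * (c.choose a : K) := by
      rw [show ((c.choose a : ℕ) : PowerSeries K) = PowerSeries.C ((c.choose a : ℕ) : K) from
        (map_natCast (PowerSeries.C (R := K)) _).symm, PowerSeries.coeff_mul_C]
    rw [h1]
    have hfac : (c.choose a : K) / (Nat.factorial c : K)
        = 1 / ((Nat.factorial a : K) * (Nat.factorial (c-a) : K)) := by
      have h := Nat.choose_mul_factorial_mul_factorial (Nat.lt_succ_iff.mp ha)
      have hc0 : (Nat.factorial c : K) ≠ 0 := Nat.cast_ne_zero.mpr (Nat.factorial_ne_zero c)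
      have ha0 : (Nat.factorial a : K) ≠ 0 := Nat.cast_ne_zero.mpr (Nat.factorial_ne_zero a)
      have hb0 : (Nat.factorial (c-a) : K) ≠ 0 := Nat.cast_ne_zero.mpr (Nat.factorial_ne_zero _)
      rw [div_eq_div_iff hc0 (mul_ne_zero ha0 hb0), one_mul]
      push_cast [← h]
      ring
    rw [mul_div_assoc, hfac, mul_one_div]
  rw [Finset.sum_congr rfl fun c _ => hR c]
  -- reindex triangle sum to square
  rw [Finset.sum_sigma', Finset.sum_sigma']
  rw [show ((range (n+1)).sigma fun _ => range (n+1)) =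
      ((range (n+1)).sigma fun _ => range (n+1)) from rfl]
  rw [← Finset.sum_filter_of_ne (p := fun x : Σ _ : ℕ, ℕ => x.1 + x.2 ≤ n)
    (fun x _ hne => by
      by_contra hc
      exact hne (by rw [hFzero x.1 x.2 (by omega), zero_div]))]
  refine (Finset.sum_nbij' (fun x : Σ _ : ℕ, ℕ => (⟨x.2, x.1 - x.2⟩ : Σ _ : ℕ, ℕ))
    (fun x : Σ _ : ℕ, ℕ => (⟨x.1 + x.2, x.1⟩ : Σ _ : ℕ, ℕ)) ?_ ?_ ?_ ?_ ?_).symm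
  · rintro ⟨c, a⟩ h
    simp only [Finset.mem_sigma, mem_range, Finset.mem_filter] at h ⊢
    omega
  · rintro ⟨a, b⟩ h
    simp only [Finset.mem_sigma, mem_range, Finset.mem_filter] at h ⊢
    omega
  · rintro ⟨c, a⟩ h
    simp only [Finset.mem_sigma, mem_range] at h
    refine Sigma.ext (by dsimp only <;> omega) (by dsimp only <;> simp)
  · rintro ⟨a, b⟩ h
    refine Sigma.ext (by dsimp only <;> omega) (by dsimp only <;> simp)
  · rintro ⟨c, a⟩ h
    rfl

private lemma rescale_pexp {K : Type*} [Field K] (a : K) (S : PowerSeries K) :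
    PowerSeries.rescale a (pexp S) = pexp (PowerSeries.rescale a S) := by
  ext n
  rw [PowerSeries.coeff_rescale, pexp, pexp, coeff_mk, coeff_mk, Finset.mul_sum]
  refine Finset.sum_congr rfl fun c _ => ?_
  rw [← map_pow, PowerSeries.coeff_rescale, mul_div_assoc]

private lemma zpow_key {K : Type*} [Field K] {x : K} (hx : x ≠ 0) (N i j k : ℤ) :
    (1 - (x ^ (2:ℤ)) ^ (N - i)) * x ^ (i - 1) * x ^ (j - i + 2 * k)
      + (1 - (x ^ (2:ℤ)) ^ (N - j)) * x ^ (j - 1)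
    = (1 - (x ^ (2:ℤ)) ^ (N - (i - k))) * x ^ (i - k - 1) * x ^ (j - i + k)
      + (1 - (x ^ (2:ℤ)) ^ (N - (j + k))) * x ^ (j + k - 1) * x ^ k := by
  have l : ∀ a b c : ℤ, (1 - (x ^ (2:ℤ)) ^ a) * x ^ b * x ^ c
      = x ^ (b + c) - x ^ (2 * a + (b + c)) := by
    intro a b c
    rw [mul_assoc, ← zpow_add₀ hx, ← zpow_mul, sub_mul, one_mul, ← zpow_add₀ hx]
  have l2 : ∀ a b : ℤ, (1 - (x ^ (2:ℤ)) ^ a) * x ^ b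
      = x ^ (b + 0) - x ^ (2 * a + (b + 0)) := by
    intro a b
    rw [← l a b 0, zpow_zero, mul_one]
  rw [l, l2, l, l]
  rw [show (i - 1) + (j - i + 2 * k) = (j + k - 1) + k by ring,
    show 2 * (N - i) + ((j + k - 1) + k) = 2 * (N - (i - k)) + ((i - k - 1) + (j - i + k)) by ring,
    show (j - 1) + (0:ℤ) = (i - k - 1) + (j - i + k) by ring,
    show 2 * (N - j) + ((i - k - 1) + (j - i + k)) = 2 * (N - (j + k)) + ((j + k - 1) + k) by ring]
  ring

/-- The structure function `f^{i,j}(z)` of the deformed `W_N` algebra,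
with `p = q t⁻¹` and `sp` a square root of `p` (so `p^{1/2} = sp`). -/
noncomputable def fser {K : Type*} [Field K] (q t sp : K) (N i j : ℤ) : PowerSeries K :=
  pexp (PowerSeries.mk fun n => if n = 0 then 0 else
    (1 / (n : K)) * (1 - q ^ (n : ℤ)) * (1 - t ^ (-(n : ℤ))) *
      ((1 - (q * t⁻¹) ^ (min i j * (n : ℤ))) / (1 - (q * t⁻¹) ^ (n : ℤ))) *
      ((1 - (q * t⁻¹) ^ ((N - max i j) * (n : ℤ))) / (1 - (q * t⁻¹) ^ (N * (n : ℤ)))) *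
      sp ^ (|i - j| * (n : ℤ)))

/-- The geometric series `1/(1 - c z) = ∑_{n ≥ 0} c^n z^n`. -/
noncomputable def geom {K : Type*} [Field K] (c : K) : PowerSeries K :=
  PowerSeries.mk fun n => c ^ n

/-- `γ(p^{1/2}·(a z)) = (1 - q a z)(1 - t⁻¹ a z)/((1 - a z)(1 - p a z))`,
expanded as a formal power series in `z` (geometric series for the denominators);
here `p = sp^2`. -/
noncomputable def gammaSer {K : Type*} [Field K] (q t sp a : K) : PowerSeries K :=
  (1 - PowerSeries.C (q * a) * PowerSeries.X) *
    (1 - PowerSeries.C (t⁻¹ * a) * PowerSeries.X) * geom a * geom (sp ^ 2 * a)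

/-- The identity
`f^{1,i}(p^{(j-i)/2+k} z) · f^{1,j}(z) = f^{1,i-k}(p^{(j-i+k)/2} z) · f^{1,j+k}(p^{k/2} z)`
for integers `i, j, k` with `i, j, i-k, j+k` all between `1` and `N-1`. -/
theorem fser_fusion_shift {K : Type*} [Field K] [CharZero K] (q t sp : K) (N : ℤ) (hN : 2 ≤ N)
    (hq : q ≠ 0) (ht : t ≠ 0) (hsp : sp ^ 2 = q * t⁻¹)
    (hp : ∀ n : ℤ, n ≠ 0 → (q * t⁻¹) ^ n ≠ 1)
    (i j k : ℤ) (hi1 : 1 ≤ i) (hi2 : i ≤ N - 1) (hj1 : 1 ≤ j) (hj2 : j ≤ N - 1)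
    (hik1 : 1 ≤ i - k) (hik2 : i - k ≤ N - 1) (hjk1 : 1 ≤ j + k) (hjk2 : j + k ≤ N - 1) :
    PowerSeries.rescale (sp ^ (j - i + 2 * k)) (fser q t sp N 1 i) * fser q t sp N 1 j =
      PowerSeries.rescale (sp ^ (j - i + k)) (fser q t sp N 1 (i - k)) *
        PowerSeries.rescale (sp ^ k) (fser q t sp N 1 (j + k)) := by
  have hP0 : q * t⁻¹ ≠ 0 := mul_ne_zero hq (inv_ne_zero ht)
  have hsp0 : sp ≠ 0 := by
    intro h
    rw [h] at hsp
    exact hP0 (by simpa using hsp.symm)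
  unfold fser
  rw [rescale_pexp, rescale_pexp, rescale_pexp]
  have hcc : ∀ (S : PowerSeries K) (a : K), constantCoeff S = 0 →
      constantCoeff (PowerSeries.rescale a S) = 0 := by
    intro S a h
    rw [← coeff_zero_eq_constantCoeff] at h ⊢
    rw [PowerSeries.coeff_rescale, h, mul_zero]
  have hmk : ∀ (f : ℕ → K), f 0 = 0 → constantCoeff (PowerSeries.mk f) = 0 := by
    intro f h
    rw [← coeff_zero_eq_constantCoeff, coeff_mk, h]
  rw [pexp_mul (hcc _ _ (hmk _ (by simp))) (hmk _ (by simp)),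
    pexp_mul (hcc _ _ (hmk _ (by simp))) (hcc _ _ (hmk _ (by simp)))]
  refine congrArg pexp ?_
  ext n
  simp only [map_add, PowerSeries.coeff_rescale, coeff_mk]
  by_cases hn : n = 0
  · simp [hn]
  simp only [if_neg hn]
  have hn' : ((n:ℕ):ℤ) ≠ 0 := Int.natCast_ne_zero.mpr hn
  -- min / max / abs simplifications
  rw [min_eq_left hi1, min_eq_left hj1, min_eq_left hik1, min_eq_left hjk1,
    max_eq_right hi1, max_eq_right hj1, max_eq_right hik1, max_eq_right hjk1,
    show |1 - i| = i - 1 by rw [abs_sub_comm]; exact abs_of_nonneg (by omega),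
    show |1 - j| = j - 1 by rw [abs_sub_comm]; exact abs_of_nonneg (by omega),
    show |1 - (i - k)| = i - k - 1 by rw [abs_sub_comm]; exact abs_of_nonneg (by omega),
    show |1 - (j + k)| = j + k - 1 by rw [abs_sub_comm]; exact abs_of_nonneg (by omega),
    one_mul]
  have h1 : 1 - (q * t⁻¹) ^ ((n:ℕ):ℤ) ≠ 0 := sub_ne_zero.mpr (Ne.symm (hp _ hn'))
  rw [div_self h1, mul_one]
  set x := sp ^ ((n:ℕ):ℤ) with hxdef
  have hx : x ≠ 0 := zpow_ne_zero _ hsp0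
  have hc1 : ∀ e : ℤ, sp ^ (e * ((n:ℕ):ℤ)) = x ^ e := by
    intro e; rw [hxdef, ← zpow_mul, mul_comm]
  have hc2 : ∀ e : ℤ, (q * t⁻¹) ^ (e * ((n:ℕ):ℤ)) = (x ^ (2:ℤ)) ^ e := by
    intro e
    rw [← hsp, hxdef, ← zpow_natCast sp 2, ← zpow_mul, ← zpow_mul, ← zpow_mul]
    congr 1
    push_cast
    ring
  have hsc : ∀ e : ℤ, (sp ^ e) ^ (n:ℕ) = x ^ e := by
    intro e
    rw [hxdef, ← zpow_natCast (sp ^ e) n, ← zpow_mul, ← zpow_mul, mul_comm]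
  rw [hc1 (i-1), hc1 (j-1), hc1 (i-k-1), hc1 (j+k-1),
    hc2 (N-i), hc2 (N-j), hc2 (N-(i-k)), hc2 (N-(j+k)), hc2 N,
    hsc (j-i+2*k), hsc (j-i+k), hsc k]
  linear_combination (1 / (n : K) * (1 - q ^ ((n:ℕ):ℤ)) * (1 - t ^ (-((n:ℕ):ℤ))) /
    (1 - (x ^ (2:ℤ)) ^ N)) * zpow_key hx N i j k
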